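/- Let covers : Fin n → Fin n → Prop satisfy covers i j → i < j, and define compatible i j ↔ covers i j ∨ covers j i. Assume the minimum number of chains under covers needed to partition Fin n is k. Then there exists a set S ⊆ Fin n with |S| = k such that all elements of S are pairwise incompatible (for distinct i, j ∈ S, ¬covers i j and ¬covers j i). -/

import Mathlib

/-!
A successor map `m`, a partial injection with `covers i (m i)`, determines a chain
partition whose chains start at the vertices outside its range, so it has as many
chains as there are vertices `i` with `m i = none`. Such an `m` is a matching in the bipartite
graph `i ↦ N(i) = {j | covers i j}`. If `d` is the maximal deficiency `#S - #N(S)`, the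
defect form of Hall's theorem gives a matching leaving at most `d` vertices unmatched,
so `k ≤ d`. For a set `S₀` of maximal deficiency, `S₀ \ N(S₀)` has at least `d` elements
and none of them covers another.
-/

def IsChainPartition (n : ℕ) (covers : Fin n → Fin n → Prop)
    (L : List (List (Fin n))) : Prop :=
  (∀ l ∈ L, l.Chain' covers) ∧ L.flatten.Perm (List.finRange n)

open Finset Relation

section PartialInjection

variable {α : Type*} {m : α → Option α}

theorem eq_of_reflTransGen_of_forall_ne_some
    (hinj : ∀ a a' b, m a = some b → m a' = some b → a = a') {s s' x : α}
    (hs : ∀ a, m a ≠ some s) (hs' : ∀ a, m a ≠ some s')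
    (h : ReflTransGen (fun a b => m a = some b) s x)
    (h' : ReflTransGen (fun a b => m a = some b) s' x) : s = s' := by
  induction h generalizing s' with
  | refl =>
    rcases h'.cases_tail with rfl | ⟨a, -, ha⟩
    · rfl
    · exact absurd ha (hs a)
  | tail _ hbx ih =>
    rcases h'.cases_tail with rfl | ⟨a, ha, hax⟩
    · exact absurd hbx (hs' _)
    · exact ih hs' (hinj _ _ _ hbx hax ▸ ha)

theorem exists_forall_ne_some_reflTransGen [Preorder α] [WellFoundedLT α]
    (hm : ∀ a b, m a = some b → a < b) (x : α) :
    ∃ s, (∀ a, m a ≠ some s) ∧ ReflTransGen (fun a b => m a = some b) s x := by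
  induction x using WellFoundedLT.induction with
  | _ x ih =>
    rcases em (∃ a, m a = some x) with ⟨a, ha⟩ | hx
    · obtain ⟨s, hs, hsa⟩ := ih a (hm a x ha)
      exact ⟨s, hs, hsa.tail ha⟩
    · exact ⟨x, fun a ha => hx ⟨a, ha⟩, .refl⟩

theorem card_filter_forall_ne_some [Fintype α] [DecidableEq α]
    (hinj : ∀ a a' b, m a = some b → m a' = some b → a = a') :
    #{x | ∀ a, m a ≠ some x} = #{a | m a = none} := by
  have hdom : #{a | m a ≠ none} = #{x | ∃ a, m a = some x} := by
    refine card_bij (fun a ha => (m a).get (Option.isSome_iff_ne_none.2 (mem_filter.1 ha).2))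
      (fun a _ => by simp)
      (fun a _ a' _ h => hinj a a' _ (Option.some_get _).symm (by rw [h, Option.some_get])) ?_
    simp only [mem_filter, mem_univ, true_and, forall_exists_index]
    exact fun x a ha => ⟨a, by simp [ha], by simp [ha]⟩
  have h1 := card_filter_add_card_filter_not (s := univ) (fun a => m a = none)
  have h2 := card_filter_add_card_filter_not (s := univ) (fun x => ∃ a, m a = some x)
  simp only [not_exists, ← ne_eq] at h1 h2
  omega

end PartialInjection

theorem exists_partialInjective_of_card_le_card_biUnion_add {α β : Type*} [Fintype α]
    [DecidableEq β] (t : α → Finset β) (d : ℕ) (h : ∀ s : Finset α, #s ≤ #(s.biUnion t) + d) :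
    ∃ m : α → Option β, (∀ a a' b, m a = some b → m a' = some b → a = a') ∧
      (∀ a b, m a = some b → b ∈ t a) ∧ #{a | m a = none} ≤ d := by
  -- Hall's theorem, after adjoining `d` new vertices adjacent to every `a`
  set t' : α → Finset (β ⊕ Fin d) := fun a => (t a).disjSum univ
  have hall : ∀ s : Finset α, #s ≤ #(s.biUnion t') := by
    intro s
    rcases s.eq_empty_or_nonempty with rfl | ⟨a, ha⟩
    · simp
    calc #s ≤ #(s.biUnion t) + d := h s
      _ = #((s.biUnion t).disjSum (univ : Finset (Fin d))) := by simp
      _ ≤ #(s.biUnion t') := by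
        refine card_le_card ?_
        rintro (b | e) hx
        · obtain ⟨a', ha', hb⟩ := mem_biUnion.1 (inl_mem_disjSum.1 hx)
          exact mem_biUnion.2 ⟨a', ha', inl_mem_disjSum.2 hb⟩
        · exact mem_biUnion.2 ⟨a, ha, inr_mem_disjSum.2 (mem_univ e)⟩
  obtain ⟨f, hf, hft⟩ := (all_card_le_biUnion_card_iff_exists_injective t').1 hall
  refine ⟨fun a => (f a).getLeft?, fun a a' b ha ha' => ?_, fun a b ha => ?_, ?_⟩
  · rw [Sum.getLeft?_eq_some_iff] at ha ha'
    exact hf (ha.trans ha'.symm)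
  · rw [Sum.getLeft?_eq_some_iff] at ha
    simpa [t', ha] using hft a
  · calc #{a | (f a).getLeft? = none} ≤ #((univ : Finset (Fin d)).map .inr) := by
          refine card_le_card_of_injOn f (fun a ha => ?_) hf.injOn
          obtain ⟨e, he⟩ := Sum.isRight_iff.1 (Sum.getLeft?_eq_none_iff.1 (mem_filter.1 ha).2)
          simp [he]
      _ = d := by simp

section ChainPartition

variable {n : ℕ}

def succChain (m : Fin n → Option (Fin n)) (hm : ∀ i j, m i = some j → i < j) (i : Fin n) :
    List (Fin n) :=
  i :: match h : m i with
    | none => []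
    | some j => have := hm i j h; succChain m hm j
termination_by n - i

section SuccChain

variable {m : Fin n → Option (Fin n)} {hm : ∀ i j, m i = some j → i < j}

theorem succChain_of_eq_none {i : Fin n} (h : m i = none) : succChain m hm i = [i] := by
  rw [succChain]; split <;> simp_all

theorem succChain_of_eq_some {i j : Fin n} (h : m i = some j) :
    succChain m hm i = i :: succChain m hm j := by
  rw [succChain]; split <;> simp_all

theorem head?_succChain (i : Fin n) : (succChain m hm i).head? = some i := by
  rw [succChain]; rfl

theorem mem_succChain_iff {i x : Fin n} :
    x ∈ succChain m hm i ↔ ReflTransGen (fun a b => m a = some b) i x := by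
  constructor
  · induction i using succChain.induct m hm with
    | _ i ih =>
      cases hi : m i with
      | none =>
        rw [succChain_of_eq_none hi, List.mem_singleton]
        rintro rfl
        exact .refl
      | some j =>
        rw [succChain_of_eq_some hi, List.mem_cons]
        rintro (rfl | hx)
        · exact .refl
        · exact .head hi (ih j hi hx)
  · intro h
    induction h using ReflTransGen.head_induction_on with
    | refl => exact List.mem_of_mem_head? (head?_succChain x)
    | head hac _ ih => exact succChain_of_eq_some hac ▸ List.mem_cons_of_mem _ ih

theorem isChain_succChain (i : Fin n) :
    (succChain m hm i).IsChain fun a b => m a = some b := by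
  induction i using succChain.induct m hm with
  | _ i ih =>
    cases hi : m i with
    | none => simp [succChain_of_eq_none hi]
    | some j =>
      rw [succChain_of_eq_some hi]
      exact (ih j hi).cons (by simp [head?_succChain, hi])

theorem nodup_succChain (i : Fin n) : (succChain m hm i).Nodup :=
  ((isChain_succChain i).imp fun a b => hm a b).pairwise.nodup

end SuccChain

theorem IsChainPartition.mono {r r' : Fin n → Fin n → Prop} (h : ∀ a b, r a b → r' a b)
    {L : List (List (Fin n))} (hL : IsChainPartition n r L) : IsChainPartition n r' L :=
  ⟨fun l hl => (hL.1 l hl).imp h, hL.2⟩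

theorem exists_isChainPartition_of_succ (m : Fin n → Option (Fin n))
    (hm : ∀ i j, m i = some j → i < j) (hinj : ∀ i i' j, m i = some j → m i' = some j → i = i') :
    ∃ L, L.length = #{i | m i = none} ∧ IsChainPartition n (fun a b => m a = some b) L := by
  set roots : Finset (Fin n) := {x | ∀ i, m i ≠ some x}
  refine ⟨roots.toList.map (succChain m hm), ?_, fun l hl => ?_, ?_⟩
  · rw [List.length_map, length_toList]
    -- the two filters differ only in their `Decidable` instances
    convert card_filter_forall_ne_some hinj
  · obtain ⟨s, -, rfl⟩ := List.mem_map.1 hl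
    exact isChain_succChain s
  refine (List.perm_ext_iff_of_nodup ?_ (List.nodup_finRange n)).2 fun x => ?_
  · rw [List.nodup_flatten, List.pairwise_map]
    refine ⟨fun l hl => ?_, (nodup_toList roots).imp_of_mem fun hs hs' hne x hxs hxs' => hne ?_⟩
    · obtain ⟨s, -, rfl⟩ := List.mem_map.1 hl
      exact nodup_succChain s
    · exact eq_of_reflTransGen_of_forall_ne_some hinj (mem_filter.1 (mem_toList.1 hs)).2
        (mem_filter.1 (mem_toList.1 hs')).2 (mem_succChain_iff.1 hxs) (mem_succChain_iff.1 hxs')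
  · obtain ⟨s, hs, hsx⟩ := exists_forall_ne_some_reflTransGen hm x
    simp only [List.mem_flatten, List.mem_map, mem_toList, List.mem_finRange, iff_true]
    exact ⟨_, ⟨s, by simpa [roots] using hs, rfl⟩, mem_succChain_iff.2 hsx⟩

end ChainPartition

/-- Hard direction of the min-max theorem: if the minimum chain cover has size
`k`, then there exist `k` pairwise incompatible trips. -/
theorem stmt_6 (n : ℕ) (covers : Fin n → Fin n → Prop)
    (hlt : ∀ i j, covers i j → i < j) (k : ℕ)
    (hk : IsLeast {t | ∃ L : List (List (Fin n)),
      L.length = t ∧ IsChainPartition n covers L} k) :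
    ∃ S : Finset (Fin n), S.card = k ∧
      ∀ i ∈ S, ∀ j ∈ S, i ≠ j → ¬covers i j ∧ ¬covers j i := by
  classical
  set t : Fin n → Finset (Fin n) := fun i => {j | covers i j}
  obtain ⟨S₀, -, hS₀⟩ := exists_max_image univ (fun S => #S - #(S.biUnion t)) univ_nonempty
  obtain ⟨m, hinj, hmt, hnone⟩ := exists_partialInjective_of_card_le_card_biUnion_add t
    (#S₀ - #(S₀.biUnion t)) fun S => by have := hS₀ S (mem_univ S); omega
  have hcov : ∀ i j, m i = some j → covers i j := fun i j h => by simpa [t] using hmt i j h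
  obtain ⟨L, hLlen, hL⟩ :=
    exists_isChainPartition_of_succ m (fun i j h => hlt i j (hcov i j h)) hinj
  have hk_le : k ≤ #(S₀ \ S₀.biUnion t) := calc
    k ≤ L.length := hk.2 ⟨L, rfl, hL.mono hcov⟩
    _ = #{i | m i = none} := hLlen
    _ ≤ #S₀ - #(S₀.biUnion t) := hnone
    _ ≤ #(S₀ \ S₀.biUnion t) := le_card_sdiff _ _
  obtain ⟨S, hS, rfl⟩ := exists_subset_card_eq hk_le
  have hindep : ∀ i ∈ S, ∀ j ∈ S, ¬covers i j := fun i hi j hj hij =>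
    (mem_sdiff.1 (hS hj)).2 (mem_biUnion.2 ⟨i, (mem_sdiff.1 (hS hi)).1, by simpa [t] using hij⟩)
  exact ⟨S, rfl, fun i hi j hj _ => ⟨hindep i hi j hj, hindep j hj i hi⟩⟩
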